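/- (Mann) Let k ≥ 1, let a₁, …, a_k ∈ ℚ, and let ζ₁, …, ζ_k ∈ ℂ be pairwise distinct roots of unity with Σ_{i=1}^k a_i ζ_i = 0. Suppose this relation is irreducible, i.e., for every nonempty proper subset I ⊊ {1,…,k} one has Σ_{i∈I} a_i ζ_i ≠ 0. Let M be the product of all prime numbers p ≤ k. Then for all i, j ∈ {1,…,k} the ratio ζ_i/ζ_j is an M-th root of unity, i.e. (ζ_i/ζ_j)^M = 1. -/

import Mathlib

/-!
Divide by one term, so that the relation involves `n`-th roots of unity `ξ ^ eᵢ` (with `ξ`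
primitive) one of which is `1`, and induct on `n`. If `n ∣ M` we are done. Otherwise some prime
`p ∣ n` has `p² ∣ n` or `p > k`; write `n = p * m` and `ω = ξ ^ m`. Whenever `p ∤ 1 + j * m`,
the exponent `1 + j * m` is prime to `n`, and the Galois conjugate `ξ ↦ ξ ^ (1 + j * m)` of the
relation reads `∑ aᵢ ξ ^ eᵢ ω ^ (j * eᵢ) = 0`. This holds for all `j : ZMod p` but at most one
`j₀`, so by Fourier inversion on `ZMod p` the partial sums `T r` over the classes `eᵢ ≡ r (mod p)`
are all multiples of one number. That number is `0`: if `p ∣ m` no `j` is excluded, and if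
`k < p` some class is empty. Irreducibility then puts all `eᵢ` in the class of `0`, so every
term is an `m`-th root of unity.
-/

open Finset Polynomial

def IsRootOfUnity (ζ : ℂ) : Prop := ∃ n : ℕ, 0 < n ∧ ζ ^ n = 1

theorem IsPrimitiveRoot.aeval_pow_eq_zero_of_coprime {K : Type*} [Field K] [CharZero K]
    {n : ℕ} (hn : 0 < n) {ξ : K} (hξ : IsPrimitiveRoot ξ n) {P : ℚ[X]} (hP : aeval ξ P = 0)
    {u : ℕ} (hu : u.Coprime n) : aeval (ξ ^ u) P = 0 := by
  obtain ⟨Q, rfl⟩ : cyclotomic n ℚ ∣ P := cyclotomic_eq_minpoly_rat hξ hn ▸ minpoly.dvd ℚ ξ hP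
  have hroot : aeval (ξ ^ u) (cyclotomic n ℚ) = 0 := by
    simpa [aeval_def, eval₂_eq_eval_map] using (hξ.pow_of_coprime u hu).isRoot_cyclotomic hn
  rw [map_mul, hroot, zero_mul]

theorem IsPrimitiveRoot.sum_pow_mul_eq_zero_of_coprime {K ι : Type*} [Field K] [CharZero K]
    [Fintype ι] {n : ℕ} (hn : 0 < n) {ξ : K} (hξ : IsPrimitiveRoot ξ n) (a : ι → ℚ) (e : ι → ℕ)
    (h : ∑ i, (a i : K) * ξ ^ e i = 0) {u : ℕ} (hu : u.Coprime n) :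
    ∑ i, (a i : K) * ξ ^ (u * e i) = 0 := by
  have haeval (x : K) : aeval x (∑ i, C (a i) * X ^ e i) = ∑ i, (a i : K) * x ^ e i := by
    simp
  have := hξ.aeval_pow_eq_zero_of_coprime hn ((haeval ξ).trans h) hu
  simpa only [haeval, ← pow_mul] using this

theorem AddChar.card_mul_eq_of_sum_mul_eq_zero {A R : Type*} [CommRing A] [Fintype A]
    [DecidableEq A] [CommRing R] [IsDomain R] {ψ : AddChar A R} (hψ : ψ.IsPrimitive)
    (T : A → R) (j₀ : A) (h : ∀ j ≠ j₀, ∑ r, T r * ψ (j * r) = 0) (r : A) :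
    Fintype.card A * T r = ψ (-(j₀ * r)) * ∑ r', T r' * ψ (j₀ * r') := by
  calc (Fintype.card A : R) * T r
      = ∑ r', T r' * ∑ j, ψ (j * (r' - r)) := by
        simp [AddChar.sum_mulShift (ψ := ψ) _ hψ, sub_eq_zero, mul_comm]
    _ = ∑ j, ψ (-(j * r)) * ∑ r', T r' * ψ (j * r') := by
        simp_rw [mul_sum, mul_sub, sub_eq_add_neg, AddChar.map_add_eq_mul]
        rw [sum_comm]
        refine sum_congr rfl fun j _ => sum_congr rfl fun r' _ => ?_
        rw [neg_mul_eq_mul_neg]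
        ring
    _ = ψ (-(j₀ * r)) * ∑ r', T r' * ψ (j₀ * r') :=
        sum_eq_single j₀ (fun j _ hj => by rw [h j hj, mul_zero]) (by simp)

theorem AddChar.eq_zero_iff_of_sum_mul_eq_zero {A R : Type*} [CommRing A] [Fintype A]
    [DecidableEq A] [CommRing R] [IsDomain R] [CharZero R] {ψ : AddChar A R}
    (hψ : ψ.IsPrimitive) (T : A → R) (j₀ : A) (h : ∀ j ≠ j₀, ∑ r, T r * ψ (j * r) = 0) (r : A) :
    T r = 0 ↔ ∑ r', T r' * ψ (j₀ * r') = 0 := by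
  have hψr : ψ (-(j₀ * r)) ≠ 0 := left_ne_zero_of_mul_eq_one (b := ψ (j₀ * r)) (by
    rw [← AddChar.map_add_eq_mul, neg_add_cancel, AddChar.map_zero_eq_one])
  rw [← mul_right_inj' (Nat.cast_ne_zero.2 (Fintype.card_ne_zero (α := A))), mul_zero,
    AddChar.card_mul_eq_of_sum_mul_eq_zero hψ T j₀ h r, mul_eq_zero, or_iff_right hψr]

theorem IsPrimitiveRoot.sum_mul_pow_pow_mul_eq_zero {K ι : Type*} [Field K] [CharZero K]
    [Fintype ι] {p m : ℕ} (hn : 0 < p * m) {ξ : K} (hξ : IsPrimitiveRoot ξ (p * m))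
    (a : ι → ℚ) (e : ι → ℕ) (h : ∑ i, (a i : K) * ξ ^ e i = 0) {j : ℕ}
    (hj : (1 + j * m).Coprime p) :
    ∑ i, (a i : K) * ξ ^ e i * (ξ ^ m) ^ (j * e i) = 0 := by
  have hu : (1 + j * m).Coprime (p * m) := Nat.coprime_mul_iff_right.2
    ⟨hj, (Nat.coprime_add_mul_right_left 1 m j).2 (Nat.coprime_one_left m)⟩
  rw [← hξ.sum_pow_mul_eq_zero_of_coprime hn a e h hu]
  refine sum_congr rfl fun i _ => ?_
  rw [← pow_mul, mul_assoc, ← pow_add]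
  ring_nf

theorem IsPrimitiveRoot.sum_fiber_eq_zero {K ι : Type*} [Field K] [CharZero K] [Fintype ι]
    {p m : ℕ} [hp : Fact p.Prime] (hm : 0 < m) (hpm : p ∣ m ∨ Fintype.card ι < p) {ξ : K}
    (hξ : IsPrimitiveRoot ξ (p * m)) (a : ι → ℚ) (e : ι → ℕ)
    (h : ∑ i, (a i : K) * ξ ^ e i = 0) (r : ZMod p) :
    ∑ i with (e i : ZMod p) = r, (a i : K) * ξ ^ e i = 0 := by
  have hn : 0 < p * m := mul_pos hp.out.pos hm
  have hω : IsPrimitiveRoot (ξ ^ m) p := hξ.pow hn (mul_comm p m)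
  set ψ := AddChar.zmodChar p hω.pow_eq_one
  have hψ : ψ.IsPrimitive := AddChar.zmodChar_primitive_of_primitive_root p hω
  set T : ZMod p → K := fun r => ∑ i with (e i : ZMod p) = r, (a i : K) * ξ ^ e i
  have hF (j : ZMod p) (hj : 1 + j * m ≠ 0) : ∑ r, T r * ψ (j * r) = 0 := by
    have hjp : (1 + j.val * m).Coprime p := by
      rw [Nat.coprime_comm, hp.out.coprime_iff_not_dvd, ← ZMod.natCast_eq_zero_iff]
      simpa using hj
    rw [← hξ.sum_mul_pow_pow_mul_eq_zero hn a e h hjp, ← sum_fiberwise univ fun i => (e i : ZMod p)]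
    refine sum_congr rfl fun r _ => ?_
    rw [sum_mul]
    refine sum_congr rfl fun i hi => ?_
    rw [← (mem_filter.1 hi).2, ← AddChar.zmodChar_apply' (n := p) hω.pow_eq_one, Nat.cast_mul,
      ZMod.natCast_zmod_val]
  obtain ⟨j₀, hj₀⟩ : ∃ j₀ : ZMod p, ∀ j ≠ j₀, 1 + j * m ≠ 0 := by
    refine ⟨-(m : ZMod p)⁻¹, fun j hj hjm => hj ?_⟩
    have hm0 : (m : ZMod p) ≠ 0 := by rintro hm0; simp [hm0] at hjm
    field_simp
    linear_combination hjm
  have hT := AddChar.eq_zero_iff_of_sum_mul_eq_zero hψ T j₀ fun j hj => hF j (hj₀ j hj)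
  refine (hT r).2 ?_
  rcases hpm with hpm | hcard
  · exact hF j₀ (by simp [(ZMod.natCast_eq_zero_iff m p).2 hpm])
  · obtain ⟨r₀, hr₀⟩ : ∃ r₀ : ZMod p, ∀ i, (e i : ZMod p) ≠ r₀ := by
      by_contra! hsurj
      have := Fintype.card_le_of_surjective _ hsurj
      simp only [ZMod.card] at this
      omega
    exact (hT r₀).1 (sum_eq_zero fun i hi => absurd (mem_filter.1 hi).2 (hr₀ i))

def ProperSubsumsNeZero {ι M : Type*} [Fintype ι] [AddCommMonoid M] (f : ι → M) : Prop :=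
  ∀ s : Finset ι, s.Nonempty → s ≠ univ → ∑ i ∈ s, f i ≠ 0

theorem ProperSubsumsNeZero.mul_const {ι R : Type*} [Fintype ι] [Semiring R] [NoZeroDivisors R]
    {f : ι → R} (hf : ProperSubsumsNeZero f) {c : R} (hc : c ≠ 0) :
    ProperSubsumsNeZero fun i => f i * c := fun s hs hsu => by
  rw [← sum_mul]
  exact mul_ne_zero (hf s hs hsu) hc

theorem ProperSubsumsNeZero.eq_of_sum_fiber_eq_zero {ι κ M : Type*} [Fintype ι] [DecidableEq κ]
    [AddCommMonoid M] {f : ι → M} (hf : ProperSubsumsNeZero f) {g : ι → κ}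
    (hg : ∀ b, ∑ i with g i = b, f i = 0) (i j : ι) : g i = g j := by
  by_contra hij
  refine hf _ ⟨j, by simp⟩ (fun huniv => ?_) (hg (g j))
  simpa [hij] using eq_univ_iff_forall.1 huniv i

theorem Nat.exists_prime_dvd_of_not_dvd_primorial {n k : ℕ} (h : ¬ n ∣ primorial k) :
    ∃ p, p.Prime ∧ p ∣ n ∧ (p * p ∣ n ∨ k < p) := by
  by_contra! hsmall
  have hsf : Squarefree n := Nat.squarefree_iff_prime_squarefree.2 fun p hp hpp =>
    (hsmall p hp (dvd_of_mul_left_dvd hpp)).1 hpp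
  refine h (Nat.prod_primeFactors_of_squarefree hsf ▸ prod_dvd_prod_of_subset _ _ _ ?_)
  intro p hp
  have hp' := Nat.mem_primeFactors.1 hp
  simpa [Nat.lt_succ_iff] using ⟨(hsmall p hp'.1 hp'.2.1).2, hp'.1⟩

theorem pow_div_prime_eq_one_of_properSubsumsNeZero {ι : Type*} [Fintype ι] {n p : ℕ}
    (hn : 0 < n) (hp : p.Prime) (hpn : p ∣ n) (hbad : p * p ∣ n ∨ Fintype.card ι < p)
    (a : ι → ℚ) {η : ι → ℂ} (hη : ∀ i, η i ^ n = 1) {i₀ : ι} (hi₀ : η i₀ = 1)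
    (hrel : ∑ i, (a i : ℂ) * η i = 0) (hirr : ProperSubsumsNeZero fun i => (a i : ℂ) * η i)
    (i : ι) : η i ^ (n / p) = 1 := by
  have := Fact.mk hp
  obtain ⟨m, rfl⟩ := hpn
  have hm : 0 < m := pos_of_mul_pos_right hn (Nat.zero_le p)
  obtain ⟨ξ, hξ⟩ : ∃ ξ : ℂ, IsPrimitiveRoot ξ (p * m) :=
    ⟨_, Complex.isPrimitiveRoot_exp _ hn.ne'⟩
  have := NeZero.of_pos hn
  choose e _ he using fun i => hξ.eq_pow_of_pow_eq_one (hη i)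
  have hpm : p ∣ m ∨ Fintype.card ι < p := hbad.imp_left (Nat.dvd_of_mul_dvd_mul_left hp.pos)
  have hfib (r : ZMod p) : ∑ i with (e i : ZMod p) = r, (a i : ℂ) * η i = 0 := by
    simpa only [he] using hξ.sum_fiber_eq_zero hm hpm a e (by simpa only [he] using hrel) r
  have hpe : p ∣ e i := by
    rw [← ZMod.natCast_eq_zero_iff, hirr.eq_of_sum_fiber_eq_zero hfib i i₀,
      ZMod.natCast_eq_zero_iff]
    exact dvd_of_mul_right_dvd ((hξ.pow_eq_one_iff_dvd _).1 ((he i₀).trans hi₀))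
  obtain ⟨c, hc⟩ := hpe
  rw [Nat.mul_div_cancel_left m hp.pos, ← he, ← pow_mul, hc, mul_right_comm, pow_mul,
    hξ.pow_eq_one, one_pow]

theorem pow_primorial_eq_one_of_properSubsumsNeZero {ι : Type*} [Fintype ι] (a : ι → ℚ)
    {η : ι → ℂ} {n : ℕ} (hn : 0 < n) (hη : ∀ i, η i ^ n = 1) {i₀ : ι} (hi₀ : η i₀ = 1)
    (hrel : ∑ i, (a i : ℂ) * η i = 0) (hirr : ProperSubsumsNeZero fun i => (a i : ℂ) * η i)
    (i : ι) : η i ^ primorial (Fintype.card ι) = 1 := by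
  induction n using Nat.strong_induction_on with
  | _ n ih =>
  by_cases hdvd : n ∣ primorial (Fintype.card ι)
  · obtain ⟨c, hc⟩ := hdvd
    rw [hc, pow_mul, hη, one_pow]
  · obtain ⟨p, hp, hpn, hbad⟩ := Nat.exists_prime_dvd_of_not_dvd_primorial hdvd
    exact ih (n / p) (Nat.div_lt_self hn hp.one_lt) (Nat.div_pos (Nat.le_of_dvd hn hpn) hp.pos)
      (pow_div_prime_eq_one_of_properSubsumsNeZero hn hp hpn hbad a hη hi₀ hrel hirr)

theorem exists_pos_forall_pow_eq_one {ι : Type*} [Fintype ι] {ζ : ι → ℂ}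
    (hζ : ∀ i, IsRootOfUnity (ζ i)) : ∃ N, 0 < N ∧ ∀ i, ζ i ^ N = 1 := by
  choose n hn hζn using hζ
  refine ⟨∏ i, n i, prod_pos fun i _ => hn i, fun i => ?_⟩
  obtain ⟨c, hc⟩ := dvd_prod_of_mem n (mem_univ i)
  rw [hc, pow_mul, hζn, one_pow]

theorem stmt_13 (k : ℕ) (a : Fin k → ℚ) (ζ : Fin k → ℂ)
    (hroot : ∀ i, IsRootOfUnity (ζ i))
    (hrel : ∑ i, (a i : ℂ) * ζ i = 0)
    (hirr : ∀ s : Finset (Fin k), s.Nonempty → s ≠ Finset.univ →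
      ∑ i ∈ s, (a i : ℂ) * ζ i ≠ 0) :
    ∀ i j, (ζ i / ζ j) ^ (∏ p ∈ (Finset.range (k + 1)).filter Nat.Prime, p) = 1 := by
  intro i j
  obtain ⟨N, hN, hζN⟩ := exists_pos_forall_pow_eq_one hroot
  have hζj : ζ j ≠ 0 := fun h0 => by simpa [h0, hN.ne'] using hζN j
  have hterm (l : Fin k) : (a l : ℂ) * (ζ l / ζ j) = (a l : ℂ) * ζ l * (ζ j)⁻¹ := by
    rw [div_eq_mul_inv, mul_assoc]
  have hrel' : ∑ l, (a l : ℂ) * (ζ l / ζ j) = 0 := by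
    simp only [hterm, ← sum_mul, hrel, zero_mul]
  have hirr' : ProperSubsumsNeZero fun l => (a l : ℂ) * (ζ l / ζ j) := by
    simpa only [hterm] using ProperSubsumsNeZero.mul_const hirr (inv_ne_zero hζj)
  have := pow_primorial_eq_one_of_properSubsumsNeZero a hN
    (by simp [div_pow, hζN]) (div_self hζj) hrel' hirr' i
  rwa [Fintype.card_fin] at this
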